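/- arXiv:2205.11076 — 4 statements merged into one kernel-verified Lean document; each statement's English description precedes it below -/
import Mathlib

section
/- For every positive integer m, every integer i with 1 ≤ i ≤ m, and every integer k with 0 ≤ k ≤ m - i, the alternating sum ∑_{j=0}^{2m} (-1)^j · [Gaussian binomial (m+i choose j-k)_q] · q^{binom(m-j+1, 2)} equals 0, where (n choose r)_q denotes the Gaussian (q-)binomial coefficient (taken to be 0 when r < 0 or r > n) and binom(a,2) = a(a-1)/2 (which is well-defined and nonnegative for all integers a). -/
/-- The Gaussian (q-)binomial coefficient, defined via the q-Pascal recurrence. -/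
def gaussBinom {R : Type*} [CommSemiring R] (q : R) : ℕ → ℕ → R
  | _, 0 => 1
  | 0, _ + 1 => 0
  | n + 1, k + 1 => gaussBinom q n k + q ^ (k + 1) * gaussBinom q n (k + 1)

/-- Gaussian binomial with integer arguments: zero when the lower index is
negative or exceeds the upper index. -/
def gaussBinomZ {R : Type*} [CommRing R] (q : R) (n k : ℤ) : R :=
  if 0 ≤ k ∧ k ≤ n then gaussBinom q n.toNat k.toNat else 0

/-- `binom2 a = a * (a-1) / 2`, a nonnegative integer for every integer `a`. -/
def binom2 (a : ℤ) : ℕ := (a * (a - 1) / 2).toNat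

lemma gaussBinom_eq_zero {R : Type*} [CommSemiring R] (q : R) :
    ∀ n k : ℕ, n < k → gaussBinom q n k = 0
  | 0, _ + 1, _ => rfl
  | n + 1, k + 1, h => by
    rw [gaussBinom, gaussBinom_eq_zero q n k (by omega),
      gaussBinom_eq_zero q n (k+1) (by omega)]
    ring

lemma gaussBinom_zero_right {R : Type*} [CommSemiring R] (q : R) (n : ℕ) :
    gaussBinom q n 0 = 1 := by cases n <;> rfl

lemma choose_two_succ (l : ℕ) : (l+1).choose 2 = l.choose 2 + l := by
  induction l with
  | zero => rfl
  | succ n _ => simp [Nat.choose_succ_succ, Nat.choose_one_right]; omega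

/-- The Gauss binomial theorem:
`∑ l, (N choose l)_q q^(C(l,2)) x^l y^(N-l) = ∏_{s<N} (y + q^s x)`. -/
theorem gauss_thm {R : Type*} [CommRing R] (q y : R) :
    ∀ (N : ℕ) (x : R), ∑ l ∈ Finset.range (N+1),
      gaussBinom q N l * q ^ (l.choose 2) * x ^ l * y ^ (N - l)
      = ∏ s ∈ Finset.range N, (y + q ^ s * x)
  | 0, x => by simp [gaussBinom]
  | N + 1, x => by
    rw [Finset.sum_range_succ' (fun l => gaussBinom q (N+1) l * q ^ (l.choose 2) * x ^ l * y ^ (N + 1 - l))]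
    have step : ∀ l ∈ Finset.range (N+1),
        gaussBinom q (N+1) (l+1) * q ^ ((l+1).choose 2) * x ^ (l+1) * y ^ (N + 1 - (l+1))
        = (gaussBinom q N l * q ^ (l.choose 2) * (q*x) ^ l * y ^ (N - l)) * x
          + (gaussBinom q N (l+1) * q ^ ((l+1).choose 2) * (q*x) ^ (l+1) * y ^ (N - (l+1))) * y := by
      intro l hl
      simp only [Finset.mem_range] at hl
      rw [show gaussBinom q (N+1) (l+1) = gaussBinom q N l + q ^ (l+1) * gaussBinom q N (l+1) from rfl]
      simp only [choose_two_succ]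
      have h1 : N + 1 - (l + 1) = N - l := by omega
      rcases Nat.lt_or_ge l N with h | h
      · have h2 : N - l = (N - (l+1)) + 1 := by omega
        rw [h1, h2]; ring
      · rw [h1, show N - l = 0 from by omega, show N - (l+1) = 0 from by omega,
          gaussBinom_eq_zero q N (l+1) (by omega)]
        ring
    rw [Finset.sum_congr rfl step, Finset.sum_add_distrib, ← Finset.sum_mul, ← Finset.sum_mul]
    rw [gauss_thm q y N (q*x)]
    have hsum2 : ∑ l ∈ Finset.range (N+1),
        gaussBinom q N (l+1) * q ^ ((l+1).choose 2) * (q*x) ^ (l+1) * y ^ (N - (l+1))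
        = (∏ s ∈ Finset.range N, (y + q ^ s * (q*x))) - y ^ N := by
      have h0 := Finset.sum_range_succ' (fun l => gaussBinom q N l * q ^ (l.choose 2) * (q*x) ^ l * y ^ (N - l)) N
      rw [gauss_thm q y N (q*x)] at h0
      have htop := Finset.sum_range_succ (fun l => gaussBinom q N (l+1) * q ^ ((l+1).choose 2) * (q*x) ^ (l+1) * y ^ (N - (l+1))) N
      simp only [gaussBinom_eq_zero q N (N+1) (by omega), zero_mul] at htop
      simp only [gaussBinom_zero_right, pow_zero, Nat.sub_zero,
        show (0:ℕ).choose 2 = 0 from rfl, mul_one, one_mul] at h0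
      rw [htop]
      linear_combination -h0
    rw [hsum2]
    have hprod : (∏ s ∈ Finset.range N, (y + q ^ s * (q * x)))
        = ∏ s ∈ Finset.range N, (y + q ^ (s+1) * x) :=
      Finset.prod_congr rfl (fun s _ => by ring)
    rw [hprod, Finset.prod_range_succ' (fun s => y + q ^ s * x) N]
    simp only [gaussBinom_zero_right, pow_zero, Nat.sub_zero,
      show (0:ℕ).choose 2 = 0 from rfl, mul_one, one_mul]
    ring

lemma two_mul_choose_two' (n : ℕ) : 2 * n.choose 2 + n = n * n := by
  induction n with
  | zero => rfl
  | succ d ih =>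
    rw [choose_two_succ]
    have : (d+1)*(d+1) = d*d + 2*d + 1 := by ring
    omega

lemma two_mul_binom2 (d : ℤ) : 2 * (binom2 d : ℤ) = d * (d - 1) := by
  have hnn : 0 ≤ d * (d - 1) := by
    rcases le_or_gt d 0 with h | h
    · nlinarith
    · exact mul_nonneg (by omega) (by omega)
  have hdvd : (2:ℤ) ∣ d * (d - 1) := by
    have := (Int.even_mul_succ_self (d - 1)).two_dvd
    simpa [mul_comm] using this
  rw [binom2, Int.toNat_of_nonneg (Int.ediv_nonneg hnn (by norm_num)),
    mul_comm, Int.ediv_mul_cancel hdvd]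

/-- Vanishing of the alternating q-binomial sum at `q^t` for `t < N`. -/
lemma vanish {R : Type*} [CommRing R] (q : R) (N t : ℕ) (ht : t < N) :
    ∑ l ∈ Finset.range (N+1), (-1:R)^l * gaussBinom q N l * q^(l.choose 2 + t*(N-l)) = 0 := by
  have h := gauss_thm q (q^t) N (-1)
  have : ∀ l ∈ Finset.range (N+1),
      (-1:R)^l * gaussBinom q N l * q^(l.choose 2 + t*(N-l))
      = gaussBinom q N l * q ^ (l.choose 2) * (-1)^l * (q^t) ^ (N - l) := by
    intro l _
    rw [pow_add, pow_mul, ← pow_mul q t (N-l)]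
    ring
  rw [Finset.sum_congr rfl this, h]
  exact Finset.prod_eq_zero (Finset.mem_range.mpr ht) (by ring)

lemma key_exp (t l : ℕ) :
    t * l + binom2 ((t:ℤ) + 1 - l) = (t+1).choose 2 + l.choose 2 := by
  have hB2 := two_mul_binom2 ((t:ℤ) + 1 - l)
  have h1 : (2 * ((t+1).choose 2) + (t+1) : ℤ) = (t+1) * (t+1) := by
    exact_mod_cast congrArg (Nat.cast : ℕ → ℤ) (two_mul_choose_two' (t+1))
  have h2 : (2 * (l.choose 2) + l : ℤ) = l * l := by
    exact_mod_cast congrArg (Nat.cast : ℕ → ℤ) (two_mul_choose_two' l)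
  have hgoal : (2 : ℤ) * (t * l + binom2 ((t:ℤ) + 1 - l)) = 2 * ((t+1).choose 2 + l.choose 2) := by
    push_cast
    push_cast at h1 h2
    linear_combination hB2 - h1 - h2
  have := mul_left_cancel₀ (two_ne_zero (α := ℤ)) hgoal
  exact_mod_cast this

open Polynomial in
/-- For `1 ≤ i ≤ m` and `0 ≤ k ≤ m - i`,
`∑_{j=0}^{2m} (-1)^j ⬝ (m+i choose j-k)_q ⬝ q^{binom(m-j+1,2)} = 0`,
as a polynomial identity in the indeterminate `q`. -/
theorem vanishing_qbinomial_sum (m i k : ℕ) (hm : 1 ≤ m) (hi1 : 1 ≤ i) (him : i ≤ m)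
    (hk : k ≤ m - i) :
    ∑ j ∈ Finset.range (2 * m + 1),
      (-1 : Polynomial ℤ) ^ j * gaussBinomZ (X : Polynomial ℤ) (m + i : ℤ) ((j : ℤ) - k) *
        (X : Polynomial ℤ) ^ binom2 ((m : ℤ) - j + 1) = 0 := by
  have hki : k + i ≤ m := by omega
  set N := m + i with hN
  set t := m - k with ht
  have htN : t < N := by omega
  have hsub : Finset.Ico k (k + (N + 1)) ⊆ Finset.range (2 * m + 1) := by
    intro j hj
    simp only [Finset.mem_Ico, Finset.mem_range] at *
    omega
  have hzero : ∀ j ∈ Finset.range (2 * m + 1), j ∉ Finset.Ico k (k + (N + 1)) →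
      (-1 : Polynomial ℤ) ^ j * gaussBinomZ (X : Polynomial ℤ) (m + i : ℤ) ((j : ℤ) - k) *
        (X : Polynomial ℤ) ^ binom2 ((m : ℤ) - j + 1) = 0 := by
    intro j _ hj
    simp only [Finset.mem_Ico, not_and, not_lt, not_le] at hj
    rw [gaussBinomZ, if_neg (by push_cast; omega)]
    ring
  rw [← Finset.sum_subset hsub hzero, Finset.sum_Ico_eq_sum_range, Nat.add_sub_cancel_left]
  have hdomain : ∀ S : Polynomial ℤ, (X : Polynomial ℤ) ^ (t * N) * S = 0 → S = 0 := by
    intro S h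
    rcases mul_eq_zero.mp h with h' | h'
    · exact absurd h' (pow_ne_zero _ X_ne_zero)
    · exact h'
  apply hdomain
  rw [Finset.mul_sum]
  have hterm : ∀ l ∈ Finset.range (N + 1),
      (X : Polynomial ℤ) ^ (t * N) *
        ((-1 : Polynomial ℤ) ^ (k + l) * gaussBinomZ (X : Polynomial ℤ) (m + i : ℤ) ((↑(k + l) : ℤ) - k) *
          (X : Polynomial ℤ) ^ binom2 ((m : ℤ) - ↑(k + l) + 1))
      = ((-1 : Polynomial ℤ) ^ k * (X : Polynomial ℤ) ^ ((t+1).choose 2)) *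
          ((-1 : Polynomial ℤ) ^ l * gaussBinom (X : Polynomial ℤ) N l *
            (X : Polynomial ℤ) ^ (l.choose 2 + t * (N - l))) := by
    intro l hl
    simp only [Finset.mem_range] at hl
    have hcond : (0:ℤ) ≤ (↑(k + l) : ℤ) - k ∧ (↑(k + l) : ℤ) - k ≤ ((m:ℤ) + i) := by
      push_cast; omega
    rw [gaussBinomZ, if_pos hcond]
    have h1 : ((↑(k + l) : ℤ) - k).toNat = l := by push_cast; omega
    have h2 : ((m:ℤ) + i).toNat = N := by push_cast; omega
    rw [h1, h2]
    have h3 : binom2 ((m : ℤ) - ↑(k + l) + 1) = binom2 ((t:ℤ) + 1 - l) := by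
      congr 1; push_cast; omega
    rw [h3]
    have h4 : t * N + binom2 ((t:ℤ) + 1 - l)
        = ((t+1).choose 2) + (l.choose 2 + t * (N - l)) := by
      have h5 : t * N = t * l + t * (N - l) := by
        rw [← Nat.mul_add]; congr 1; omega
      have := key_exp t l
      omega
    have hX : (X : Polynomial ℤ) ^ (t * N) * X ^ binom2 ((t:ℤ) + 1 - l)
        = X ^ ((t+1).choose 2) * X ^ (l.choose 2 + t * (N - l)) := by
      rw [← pow_add, h4, pow_add]
    linear_combination ((-1 : Polynomial ℤ) ^ (k + l) * gaussBinom (X : Polynomial ℤ) N l) * hX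
  rw [Finset.sum_congr rfl hterm, ← Finset.mul_sum, vanish (X : Polynomial ℤ) N t htN, mul_zero]
end

section
/- Let n ≥ 1 and let (a_{ij})_{1 ≤ i,j ≤ n} be a real matrix such that whenever i < k and j < k, one has a_{ik} - a_{ij} < a_{kk} - a_{kj}. Then the function S(σ) = ∑_{i=1}^n a_{i,σ(i)} over permutations σ of {1,…,n} attains its maximum value precisely at σ = identity; that is, S(σ) < S(id) for every non-identity permutation σ. -/
theorem sum_perm_aux (n : ℕ) (a : Fin n → Fin n → ℝ)
    (h : ∀ i j k : Fin n, i < k → j < k → a i k - a i j < a k k - a k j) :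
    ∀ m : ℕ, ∀ σ : Equiv.Perm (Fin n), σ.support.card ≤ m → σ ≠ 1 →
      ∑ i, a i (σ i) < ∑ i, a i i := by
  intro m
  induction m with
  | zero =>
    intro σ hc hσ
    exact absurd (Equiv.Perm.support_eq_empty_iff.mp
      (Finset.card_eq_zero.mp (Nat.le_zero.mp hc))) hσ
  | succ m ih =>
    intro σ hc hσ
    have hne : σ.support.Nonempty := by
      rw [Finset.nonempty_iff_ne_empty]
      simpa [Equiv.Perm.support_eq_empty_iff] using hσ
    set k := σ.support.max' hne with hkdef
    have hk : σ k ≠ k := by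
      have := σ.support.max'_mem hne
      rwa [Equiv.Perm.mem_support] at this
    set i := σ⁻¹ k with hidef
    set j := σ k with hjdef
    have hσi : σ i = k := by simp [hidef]
    have hik : i ≠ k := fun e => hk (hjdef.trans (e ▸ hσi))
    have hσj : σ j ≠ j := by
      intro e
      exact hk (σ.injective e)
    have himem : i ∈ σ.support := by
      rw [Equiv.Perm.mem_support, hσi]
      exact fun e => hik e.symm
    have hjmem : j ∈ σ.support := by rwa [Equiv.Perm.mem_support]
    have hjk : j ≠ k := fun e => hk e
    have hilt : i < k := lt_of_le_of_ne (σ.support.le_max' i himem) hik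
    have hjlt : j < k := lt_of_le_of_ne (σ.support.le_max' j hjmem) hjk
    set σ' := σ * Equiv.swap i k with hσ'def
    have hσ'k : σ' k = k := by
      simp [hσ'def, Equiv.Perm.mul_apply, Equiv.swap_apply_right, hσi]
    have hσ'i : σ' i = j := by
      simp [hσ'def, Equiv.Perm.mul_apply, Equiv.swap_apply_left, hjdef]
    have hσ'other : ∀ x, x ≠ i → x ≠ k → σ' x = σ x := by
      intro x hxi hxk
      simp [hσ'def, Equiv.Perm.mul_apply, Equiv.swap_apply_of_ne_of_ne hxi hxk]
    have key : ∑ x, a x (σ x) < ∑ x, a x (σ' x) := by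
      have hmem1 : k ∈ (Finset.univ : Finset (Fin n)) := Finset.mem_univ k
      have hmem2 : i ∈ Finset.univ.erase k :=
        Finset.mem_erase.mpr ⟨hik, Finset.mem_univ i⟩
      rw [← Finset.add_sum_erase _ (fun x => a x (σ x)) hmem1,
          ← Finset.add_sum_erase _ (fun x => a x (σ x)) hmem2,
          ← Finset.add_sum_erase _ (fun x => a x (σ' x)) hmem1,
          ← Finset.add_sum_erase _ (fun x => a x (σ' x)) hmem2]
      have hrest : ∑ x ∈ (Finset.univ.erase k).erase i, a x (σ x)
          = ∑ x ∈ (Finset.univ.erase k).erase i, a x (σ' x) := by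
        apply Finset.sum_congr rfl
        intro x hx
        rw [Finset.mem_erase, Finset.mem_erase] at hx
        rw [hσ'other x hx.1 hx.2.1]
      rw [hrest]
      have hineq := h i j k hilt hjlt
      rw [hσ'k, hσ'i, hσi, ← hjdef]
      linarith
    by_cases hσ'1 : σ' = 1
    · calc ∑ x, a x (σ x) < ∑ x, a x (σ' x) := key
        _ = ∑ x, a x x := by simp [hσ'1]
    · have hsub : σ'.support ⊆ σ.support.erase k := by
        intro x hx
        rw [Equiv.Perm.mem_support] at hx
        rw [Finset.mem_erase, Equiv.Perm.mem_support]
        constructor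
        · intro e; exact hx (by rw [e, hσ'k])
        · by_cases hxi : x = i
          · rw [hxi, hσi]; exact fun e => hik e.symm
          · by_cases hxk : x = k
            · exact absurd (by rw [hxk, hσ'k]) hx
            · rwa [← hσ'other x hxi hxk]
      have hcard : σ'.support.card ≤ m := by
        have h1 := Finset.card_le_card hsub
        have h2 := Finset.card_erase_lt_of_mem
          (show k ∈ σ.support from σ.support.max'_mem hne)
        omega
      calc ∑ x, a x (σ x) < ∑ x, a x (σ' x) := key
        _ < ∑ x, a x x := ih σ' hcard hσ'1

/-- If a real matrix `a` satisfies `a i k - a i j < a k k - a k j` whenever `i < k`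
and `j < k`, then `σ ↦ ∑ i, a i (σ i)` attains its maximum precisely at the
identity permutation. -/
theorem sum_perm_lt_of_ne_id (n : ℕ) (hn : 1 ≤ n) (a : Fin n → Fin n → ℝ)
    (h : ∀ i j k : Fin n, i < k → j < k → a i k - a i j < a k k - a k j)
    (σ : Equiv.Perm (Fin n)) (hσ : σ ≠ 1) :
    ∑ i, a i (σ i) < ∑ i, a i i := by
  exact sum_perm_aux n a h σ.support.card σ le_rfl hσ
end

section
/- Let m ≥ 1 and T ∈ M_{2m}(F_q). If there exists a monic irreducible polynomial p such that the p-primary component of the F_q[t]-module (F_q^{2m}, T) requires more than m generators (equivalently, the partition c_T(p) has more than m parts), then T admits no m-dimensional splitting subspace; that is, there is no m-dimensional subspace W with W + T W = F_q^{2m}. -/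
/-!
A basis of a splitting subspace `W` generates `F^{2m}` as an `F[t]`-module, because
`W + T W` already lies in the `F[t]`-span of `W`; so the module needs at most `m` generators.
Writing the characteristic polynomial as `p ^ a * r` with `p ∤ r`, multiplication by `r` maps
the module onto its `p`-primary component, which is therefore also generated by at most
`m` elements.
-/

open Polynomial Submodule

section Torsion

variable {R M : Type*} [CommSemiring R] [AddCommMonoid M] [Module R M] {a b : R}

theorem Submodule.range_smul_id_le_torsionBy (h : Module.IsTorsionBy R M (a * b)) :
    LinearMap.range (b • LinearMap.id : M →ₗ[R] M) ≤ torsionBy R M a := by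
  rintro _ ⟨x, rfl⟩
  rw [mem_torsionBy_iff, LinearMap.smul_apply, LinearMap.id_apply, smul_smul]
  exact @h x

theorem Submodule.torsionBy_le_range_smul_id (h : IsCoprime a b) :
    torsionBy R M a ≤ LinearMap.range (b • LinearMap.id : M →ₗ[R] M) := by
  obtain ⟨u, v, huv⟩ := h
  intro x hx
  rw [mem_torsionBy_iff] at hx
  refine ⟨v • x, ?_⟩
  calc b • v • x = u • a • x + (v * b) • x := by
        rw [hx, smul_zero, zero_add, mul_comm, mul_smul]
    _ = x := by rw [← mul_smul, ← add_smul, huv, one_smul]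

theorem Submodule.iSup_torsionBy_pow_eq_range_smul_id {p : R} (hp : IsCoprime p b) {n : ℕ}
    (h : Module.IsTorsionBy R M (p ^ n * b)) :
    ⨆ e : ℕ, torsionBy R M (p ^ e) = LinearMap.range (b • LinearMap.id : M →ₗ[R] M) :=
  le_antisymm (iSup_le fun e => torsionBy_le_range_smul_id (hp.pow_left (m := e)))
    ((range_smul_id_le_torsionBy h).trans (le_iSup (fun e => torsionBy R M (p ^ e)) n))

end Torsion

namespace Module.AEval'

theorem span_of_image_eq_top_of_sup_map_eq_top {R M : Type*} [CommSemiring R] [AddCommMonoid M]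
    [Module R M] (T : M →ₗ[R] M) {s : Set M} (h : span R s ⊔ (span R s).map T = ⊤) :
    span R[X] (of T '' s) = ⊤ := by
  let N : Submodule R M := ((span R[X] (of T '' s)).restrictScalars R).comap (of T).toLinearMap
  have hs : span R s ≤ N := span_le.mpr fun x hx =>
    (subset_span ⟨x, hx, rfl⟩ : of T x ∈ span R[X] (of T '' s))
  have hTs : (span R s).map T ≤ N := by
    rintro _ ⟨x, hx, rfl⟩
    change of T (T x) ∈ span R[X] (of T '' s)
    rw [← X_smul_of]
    exact smul_mem _ _ (hs hx)
  have hN : N = ⊤ := top_unique (h ▸ sup_le hs hTs)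
  refine eq_top_iff.mpr fun y _ => ?_
  have hy : (of T).symm y ∈ N := hN ▸ mem_top
  simpa [N] using hy

theorem isTorsionBy_charpoly {R M : Type*} [CommRing R] [AddCommGroup M] [Module R M]
    [Module.Free R M] [Module.Finite R M] (T : M →ₗ[R] M) :
    IsTorsionBy R[X] (AEval' T) T.charpoly := by
  rw [isTorsionBy_iff_mem_annihilator, AEval.annihilator_eq_ker_aeval, RingHom.mem_ker]
  exact T.aeval_self_charpoly

end Module.AEval'

theorem no_splitting_subspace_of_many_generators_general (F : Type*) [Field F]
    (m : ℕ) (T : (Fin (2 * m) → F) →ₗ[F] (Fin (2 * m) → F))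
    (p : F[X]) (hirr : Irreducible p)
    (hgen : m < sInf {k : ℕ | ∃ S : Finset (Module.AEval' T), S.card = k ∧
        Submodule.span F[X] (S : Set (Module.AEval' T)) =
          ⨆ e : ℕ, Submodule.torsionBy F[X] (Module.AEval' T) (p ^ e)}) :
    ¬ ∃ W : Submodule F (Fin (2 * m) → F),
        Module.finrank F W = m ∧ W ⊔ W.map T = ⊤ := by
  classical
  rintro ⟨W, hW, hsplit⟩
  let b := Module.finBasisOfFinrankEq F W hW
  have hbW : span F (Set.range (W.subtype ∘ b)) = W := by
    rw [Set.range_comp, span_image, b.span_eq, map_subtype_top]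
  have hspan : span F[X] (Module.AEval'.of T '' Set.range (W.subtype ∘ b)) = ⊤ :=
    Module.AEval'.span_of_image_eq_top_of_sup_map_eq_top T (by rwa [hbW])
  obtain ⟨a, r, hpr, hchar⟩ := WfDvdMonoid.max_power_factor T.charpoly_monic.ne_zero hirr
  have hprimary := iSup_torsionBy_pow_eq_range_smul_id ((hirr.coprime_iff_not_dvd).mpr hpr)
    (hchar ▸ Module.AEval'.isTorsionBy_charpoly T)
  let π : Module.AEval' T →ₗ[F[X]] Module.AEval' T := r • LinearMap.id
  let S := Finset.univ.image fun i => π (Module.AEval'.of T (b i))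
  have hS : span F[X] (S : Set (Module.AEval' T)) = LinearMap.range π := by
    rw [LinearMap.range_eq_map, ← hspan, map_span]
    congr 1
    ext
    simp [S]
  have hcard : S.card ≤ m := Finset.card_image_le.trans (by simp)
  refine hgen.not_ge ((Nat.sInf_le ?_).trans hcard)
  exact ⟨S, rfl, hS.trans hprimary.symm⟩

/-- If some `p`-primary component of the `F[t]`-module `(F^{2m}, T)` requires more
than `m` generators, then `T` has no `m`-dimensional splitting subspace, i.e. no
`m`-dimensional `W` with `W + T W = F^{2m}`. -/
theorem no_splitting_subspace_of_many_generators (F : Type*) [Field F] [Fintype F]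
    (m : ℕ) (hm : 1 ≤ m) (T : (Fin (2 * m) → F) →ₗ[F] (Fin (2 * m) → F))
    (p : F[X]) (hmonic : p.Monic) (hirr : Irreducible p)
    (hgen : m < sInf {k : ℕ | ∃ S : Finset (Module.AEval' T), S.card = k ∧
        Submodule.span F[X] (S : Set (Module.AEval' T)) =
          ⨆ e : ℕ, Submodule.torsionBy F[X] (Module.AEval' T) (p ^ e)}) :
    ¬ ∃ W : Submodule F (Fin (2 * m) → F),
        Module.finrank F W = m ∧ W ⊔ W.map T = ⊤ :=
  no_splitting_subspace_of_many_generators_general F m T p hirr hgen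
end

section
/- Let F_q be a finite field, m ≥ 1, and let Y range over m×m matrices over F_q subject to a staircase zero pattern: Y_{ij} = 0 whenever j < c_i − (i−1), for fixed pivots 1 ≤ c₁ < … < c_m ≤ 2m. Then the number of nonsingular such matrices Y equals (q−1)^m · q^{binom(m,2)} · ∏_{j=1}^m [r_j − (j−1)]_q, where r_j = #{i : c_i ≤ i + j − 1} and [n]_q = 1 + q + … + q^{n−1}. -/
/-!
The `j`-th column of `Y` ranges over the subspace `W j` of vectors vanishing on the rows that the
staircase forbids in that column; these subspaces increase with `j` and `dim W j = r_j`. Choosing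
the columns one at a time, `Y` is nonsingular iff every column avoids the span of the previous
ones. That span has dimension `j` and, by monotonicity, lies in `W j`, so column `j` has
`q ^ r_j - q ^ j` choices whatever the earlier columns were. Finally
`q ^ r_j - q ^ j = (q - 1) q ^ j [r_j - j]_q`.
-/

open Finset Submodule

section
variable {K V : Type*} [DivisionRing K] [Fintype K] [AddCommGroup V] [Module K V] [Finite V]

theorem card_mem_notMem_span {n : ℕ} {W : Submodule K V} {u : Fin n → V}
    (hu : LinearIndependent K u) (huW : ∀ j, u j ∈ W) :
    Nat.card {x : V // x ∈ W ∧ x ∉ span K (Set.range u)} = Nat.card W - Fintype.card K ^ n := by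
  classical
  have := Fintype.ofFinite V
  have hle : span K (Set.range u) ≤ W := span_le.2 (Set.range_subset_iff.2 huW)
  have hspan : Nat.card (span K (Set.range u)) = Fintype.card K ^ n := by
    rw [Nat.card_eq_fintype_card, Module.card_eq_pow_finrank (K := K), finrank_span_eq_card hu,
      Fintype.card_fin]
  calc Nat.card {x : V // x ∈ W ∧ x ∉ span K (Set.range u)}
      = ((W : Set V) \ span K (Set.range u)).ncard := Nat.card_coe_set_eq _
    _ = Nat.card W - Nat.card (span K (Set.range u)) := by
      rw [Set.ncard_sdiff (SetLike.coe_subset_coe.2 hle)]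
      simp only [← Nat.card_coe_set_eq, SetLike.coe_sort_coe]
    _ = Nat.card W - Fintype.card K ^ n := by rw [hspan]

def linearIndependentMemSnocEquiv {n : ℕ} (W : Fin (n + 1) → Submodule K V) :
    {v : Fin (n + 1) → V // (∀ j, v j ∈ W j) ∧ LinearIndependent K v} ≃
      Σ u : {u : Fin n → V // (∀ j, u j ∈ W j.castSucc) ∧ LinearIndependent K u},
        {x : V // x ∈ W (Fin.last n) ∧ x ∉ span K (Set.range u.1)} where
  toFun v := ⟨⟨Fin.init v.1, fun j => v.2.1 j.castSucc, (linearIndependent_finSucc'.1 v.2.2).1⟩,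
    ⟨v.1 (Fin.last n), v.2.1 (Fin.last n), (linearIndependent_finSucc'.1 v.2.2).2⟩⟩
  invFun p := ⟨Fin.snoc p.1.1 p.2.1,
    Fin.lastCases (by simpa using p.2.2.1) (fun j => by simpa using p.1.2.1 j),
    linearIndependent_finSnoc.2 ⟨p.1.2.2, p.2.2.2⟩⟩
  left_inv v := by simp [Fin.snoc_init_self]
  right_inv := by
    rintro ⟨⟨u, hu⟩, x, hx⟩
    simp only [Fin.init_snoc, Fin.snoc_last, Sigma.mk.injEq, true_and]
    exact (Subtype.heq_iff_coe_eq fun _ => by simp).2 rfl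

theorem card_linearIndependent_mem_of_monotone {n : ℕ} {W : Fin n → Submodule K V}
    (hW : Monotone W) :
    Nat.card {v : Fin n → V // (∀ j, v j ∈ W j) ∧ LinearIndependent K v} =
      ∏ j : Fin n, (Nat.card (W j) - Fintype.card K ^ (j : ℕ)) := by
  induction n with
  | zero => simp
  | succ n ih =>
    have := Fintype.ofFinite V
    classical
    have hfiber (u : {u : Fin n → V // (∀ j, u j ∈ W j.castSucc) ∧ LinearIndependent K u}) :
        Nat.card {x : V // x ∈ W (Fin.last n) ∧ x ∉ span K (Set.range u.1)} =
          Nat.card (W (Fin.last n)) - Fintype.card K ^ n :=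
      card_mem_notMem_span u.2.2 fun j => hW (Fin.le_last _) (u.2.1 j)
    rw [Nat.card_congr (linearIndependentMemSnocEquiv W), Nat.card_sigma]
    simp only [hfiber, sum_const, card_univ, smul_eq_mul]
    rw [← Nat.card_eq_fintype_card,
      ih (W := fun j => W j.castSucc) (hW.comp Fin.strictMono_castSucc.monotone),
      Fin.prod_univ_castSucc, Fin.val_last]
    rfl
end

theorem Matrix.card_isUnit_det_of_col_mem {K : Type*} [Field K] [Fintype K] {n : ℕ}
    {W : Fin n → Submodule K (Fin n → K)} (hW : Monotone W) :
    Nat.card {Y : Matrix (Fin n) (Fin n) K // (∀ j, Y.col j ∈ W j) ∧ IsUnit Y.det} =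
      ∏ j : Fin n, (Nat.card (W j) - Fintype.card K ^ (j : ℕ)) := by
  rw [← card_linearIndependent_mem_of_monotone hW]
  exact Nat.card_congr <| Equiv.subtypeEquiv ((Matrix.transposeAddEquiv _ _ K).toEquiv.trans
    Matrix.of.symm) fun Y => Iff.and Iff.rfl <|
      (Matrix.isUnit_iff_isUnit_det Y).symm.trans Matrix.linearIndependent_cols_iff_isUnit.symm

theorem Submodule.card_pi_compl_bot {K ι : Type*} [Semiring K] [Fintype K] [Fintype ι]
    (s : Finset ι) :
    Nat.card (pi (↑s)ᶜ fun _ => ⊥ : Submodule K (ι → K)) = Fintype.card K ^ #s := by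
  classical
  have hset : ((pi (↑s)ᶜ fun _ => ⊥ : Submodule K (ι → K)) : Set (ι → K)) =
      ↑(Fintype.piFinset fun i => if i ∈ s then univ else ({0} : Finset K)) := by
    ext x
    simp only [SetLike.mem_coe, mem_pi, Set.mem_compl_iff, mem_bot, Fintype.mem_piFinset]
    refine forall_congr' fun i => ?_
    split_ifs <;> simp [*]
  rw [← SetLike.coe_sort_coe, hset, Nat.card_coe_set_eq, Set.ncard_coe_finset,
    Fintype.card_piFinset]
  simp [apply_ite Finset.card, prod_ite_mem]

-- For `r < j` both sides are `0`, by truncated subtraction.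
theorem Nat.pow_sub_pow_eq_mul_geom_sum {q : ℕ} (hq : 0 < q) (r j : ℕ) :
    q ^ r - q ^ j = (q - 1) * q ^ j * ∑ t ∈ range (r - j), q ^ t := by
  rcases le_or_gt j r with hjr | hrj
  · obtain ⟨k, rfl⟩ := Nat.exists_eq_add_of_le hjr
    have hpow : q ^ j ≤ q ^ (j + k) := Nat.pow_le_pow_right hq (Nat.le_add_right j k)
    zify [hpow, hq]
    rw [add_tsub_cancel_left, mul_assoc, mul_comm, mul_assoc, geom_sum_mul, pow_add]
    ring
  · simp [Nat.sub_eq_zero_of_le hrj.le, Nat.pow_le_pow_right hq hrj.le]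

section Staircase
variable (F : Type*) [Field F] {m : ℕ} (c : Fin m → ℕ)

def staircaseColumns (j : ℕ) : Submodule F (Fin m → F) :=
  pi {i | j + i < c i} fun _ => ⊥

theorem mem_staircaseColumns {j : ℕ} {v : Fin m → F} :
    v ∈ staircaseColumns F c j ↔ ∀ i : Fin m, j + i < c i → v i = 0 := by
  simp [staircaseColumns, Submodule.mem_pi]

theorem staircaseColumns_mono : Monotone (staircaseColumns F c) := fun j k hjk v hv =>
  (mem_staircaseColumns F c).2 fun i hi => (mem_staircaseColumns F c).1 hv i (by omega)

theorem card_staircaseColumns [Fintype F] (j : ℕ) :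
    Nat.card (staircaseColumns F c j) = Fintype.card F ^ #{i | c i ≤ i + j} := by
  have hrows : {i : Fin m | j + i < c i} = (↑({i | c i ≤ i + j} : Finset (Fin m)))ᶜ := by
    ext i
    simp only [Set.mem_ofPred_eq, Set.mem_compl_iff, coe_filter, mem_univ, true_and, not_le]
    omega
  rw [staircaseColumns, hrows, card_pi_compl_bot]

end Staircase

theorem card_nonsingular_staircase_matrices_general (F : Type*) [Field F] [Fintype F]
    (m : ℕ) (c : Fin m → Fin (2 * m)) :
    Nat.card {Y : Matrix (Fin m) (Fin m) F //
        (∀ i j : Fin m, (j : ℕ) + (i : ℕ) < (c i : ℕ) → Y i j = 0) ∧ IsUnit Y.det} =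
      (Fintype.card F - 1) ^ m * Fintype.card F ^ (m * (m - 1) / 2) *
        ∏ j : Fin m,
          ∑ t ∈ Finset.range
            ((Finset.univ.filter fun i : Fin m => (c i : ℕ) ≤ (i : ℕ) + (j : ℕ)).card - (j : ℕ)),
            Fintype.card F ^ t := by
  set W : Fin m → Submodule F (Fin m → F) := fun j => staircaseColumns F (fun i => c i) j
  have hW : Monotone W := (staircaseColumns_mono F _).comp Fin.val_strictMono.monotone
  have hcols (Y : Matrix (Fin m) (Fin m) F) :
      (∀ i j : Fin m, (j : ℕ) + (i : ℕ) < (c i : ℕ) → Y i j = 0) ↔ ∀ j, Y.col j ∈ W j := by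
    simp only [W, mem_staircaseColumns]
    exact forall_comm
  have hpow_sum : ∏ j : Fin m, Fintype.card F ^ (j : ℕ) = Fintype.card F ^ (m * (m - 1) / 2) := by
    rw [prod_pow_eq_pow_sum, Fin.sum_univ_eq_sum_range (fun i => i) m, sum_range_id]
  rw [Nat.card_congr (Equiv.subtypeEquivRight fun Y => and_congr_left' (hcols Y)),
    Matrix.card_isUnit_det_of_col_mem hW, ← hpow_sum, ← Fin.prod_const m (Fintype.card F - 1),
    ← prod_mul_distrib, ← prod_mul_distrib]
  simp only [W, card_staircaseColumns, Nat.pow_sub_pow_eq_mul_geom_sum Fintype.card_pos]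

/-- For pivots `c₀ < ⋯ < c_{m-1}` in `{0, …, 2m-1}` (0-indexed form of
`1 ≤ c₁ < ⋯ < c_m ≤ 2m`), the number of nonsingular `m × m` matrices `Y` over
`F_q` with `Y i j = 0` whenever `j + i < c i` (0-indexed form of
`j < c_i - (i-1)`) equals `(q-1)^m q^{m(m-1)/2} ∏_j [r_j - j]_q`, where
`r_j = #{i : c_i ≤ i + j}`. -/
theorem card_nonsingular_staircase_matrices (F : Type*) [Field F] [Fintype F]
    (m : ℕ) (hm : 1 ≤ m) (c : Fin m → Fin (2 * m)) (hc : StrictMono c) :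
    Nat.card {Y : Matrix (Fin m) (Fin m) F //
        (∀ i j : Fin m, (j : ℕ) + (i : ℕ) < (c i : ℕ) → Y i j = 0) ∧ IsUnit Y.det} =
      (Fintype.card F - 1) ^ m * Fintype.card F ^ (m * (m - 1) / 2) *
        ∏ j : Fin m,
          ∑ t ∈ Finset.range
            ((Finset.univ.filter fun i : Fin m => (c i : ℕ) ≤ (i : ℕ) + (j : ℕ)).card - (j : ℕ)),
            Fintype.card F ^ t :=
  card_nonsingular_staircase_matrices_general F m c
end
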